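/- arXiv:2106.11884 — 6 statements merged into one kernel-verified Lean document; each statement's English description precedes it below -/
import Mathlib

section
/- Let M_i be a finite-dimensional F-vector space with a flag of subspaces given by kernels of maps φ_{i,j}, and suppose M_i admits an adapted basis for this flag. Then there exists an adapted basis of M_i containing as a subset a basis of im(φ_{i-1}), where φ_{i-1} : M_{i-1} → M_i is a given linear map. -/
/-- An adapted basis for the flag of kernels `ker (ψ 1) ⊆ ⋯ ⊆ ker (ψ (n+1)) = M` of the
maps `ψ j = φ_{i,j}` : a basis `v` of `M` together with an index function `J` such that for
each `j` the vectors `v k` with `J k ≤ j` span `ker (ψ j)`. -/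
def IsAdaptedBasis
    (F : Type*) [Field F] (M : Type*) [AddCommGroup M] [Module F M]
    (N : ℕ → Type*) [∀ j, AddCommGroup (N j)] [∀ j, Module F (N j)]
    (n : ℕ) (ψ : ∀ j, M →ₗ[F] N j)
    (m : ℕ) (v : Fin m → M) (J : Fin m → ℕ) : Prop :=
  LinearIndependent F v ∧ Submodule.span F (Set.range v) = ⊤ ∧
    ∀ j, j ≤ n + 1 → LinearMap.ker (ψ j) = Submodule.span F (v '' {k | J k ≤ j})

open Submodule Set in
/-- Core construction: for any increasing flag `K` of subspaces and any subspace `W`,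
for each `t` there is a linearly independent set `S` spanning `K t`, adapted to the flag
below `t`, containing a subset `SW` spanning `W ⊓ K t`. -/
lemma adapted_aux
    (F : Type*) [Field F] (M : Type*) [AddCommGroup M] [Module F M]
    (K : ℕ → Submodule F M) (hK : ∀ j j', j ≤ j' → K j ≤ K j')
    (W : Submodule F M) :
    ∀ t : ℕ, ∃ (S SW : Set M) (J : M → ℕ), SW ⊆ S ∧
      LinearIndependent F ((↑) : S → M) ∧
      Submodule.span F S = K t ∧ Submodule.span F SW = W ⊓ K t ∧
      (∀ x ∈ S, J x ≤ t) ∧ ∀ j, j ≤ t → Submodule.span F {x ∈ S | J x ≤ j} = K j := by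
  classical
  -- a single "extension step" used for both the base case and the inductive step
  have step : ∀ (S SW : Set M) (t : ℕ), SW ⊆ S →
      LinearIndependent F ((↑) : S → M) →
      (t = 0 → S = ∅) →
      (0 < t → Submodule.span F S = K (t - 1)) →
      (0 < t → Submodule.span F SW = W ⊓ K (t - 1)) →
      ∃ (S' SW' : Set M), SW' ⊆ S' ∧ S ⊆ S' ∧ SW ⊆ SW' ∧ SW' \ SW ⊆ S' \ S ∧
        LinearIndependent F ((↑) : S' → M) ∧
        Submodule.span F S' = K t ∧ Submodule.span F SW' = W ⊓ K t := by
    intro S SW t hsub hind hS0 hspS hspSW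
    have hSle : S ⊆ (K t : Set M) := by
      rcases Nat.eq_zero_or_pos t with ht | ht
      · simp [hS0 ht]
      · intro x hx
        have : x ∈ Submodule.span F S := subset_span hx
        rw [hspS ht] at this
        exact hK _ _ (Nat.sub_le t 1) this
    have hSWle : SW ⊆ (↑(W ⊓ K t) : Set M) := by
      rcases Nat.eq_zero_or_pos t with ht | ht
      · have : SW = ∅ := Set.eq_empty_of_subset_empty (hS0 ht ▸ hsub)
        simp [this]
      · intro x hx
        have : x ∈ Submodule.span F SW := subset_span hx
        rw [hspSW ht] at this
        exact le_inf inf_le_left (inf_le_right.trans (hK _ _ (Nat.sub_le t 1))) this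
    -- step 1 : extend `S` inside `S ∪ (W ⊓ K t)`
    obtain ⟨b, hb_sub, hSb, hb_span, hb_ind⟩ :=
      exists_linearIndepOn_extension (v := id) hind (Set.subset_union_left (t := (↑(W ⊓ K t) : Set M)))
    rw [Set.image_id, Set.image_id] at hb_span
    -- step 2 : extend `b` inside `b ∪ K t`
    obtain ⟨c, hc_sub, hbc, hc_span, hc_ind⟩ :=
      exists_linearIndepOn_extension (v := id) hb_ind (Set.subset_union_left (t := (K t : Set M)))
    rw [Set.image_id, Set.image_id] at hc_span
    have hbK : b ⊆ (K t : Set M) := by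
      intro x hx
      rcases hb_sub hx with h | h
      · exact hSle h
      · exact (Submodule.mem_inf.1 h).2
    have hcK : c ⊆ (K t : Set M) := by
      intro x hx
      rcases hc_sub hx with h | h
      · exact hbK h
      · exact h
    have hbS : b \ S ⊆ (↑(W ⊓ K t) : Set M) := by
      intro x hx
      rcases hb_sub hx.1 with h | h
      · exact absurd h hx.2
      · exact h
    refine ⟨c, SW ∪ (b \ S), ?_, hSb.trans hbc, Set.subset_union_left, ?_, hc_ind, ?_, ?_⟩
    · exact Set.union_subset (hsub.trans (hSb.trans hbc)) ((Set.diff_subset).trans hbc)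
    · intro x hx
      have hxb : x ∈ b \ S := by
        rcases hx.1 with h | h
        · exact absurd h hx.2
        · exact h
      exact ⟨hbc hxb.1, hxb.2⟩
    · -- span c = K t
      refine le_antisymm (span_le.2 hcK) ?_
      have : (K t : Set M) ⊆ Submodule.span F c := fun x hx => hc_span (Or.inr hx)
      intro x hx; exact this hx
    · -- span (SW ∪ (b \ S)) = W ⊓ K t
      refine le_antisymm ?_ ?_
      · rw [Set.union_comm, span_union]
        refine sup_le (span_le.2 hbS) (span_le.2 hSWle)
      · intro w hw
        have hwspan : w ∈ Submodule.span F b := hb_span (Or.inr hw)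
        have hb_eq : b = S ∪ (b \ S) := (Set.union_diff_cancel hSb).symm
        rw [hb_eq, span_union] at hwspan
        obtain ⟨u, hu, x, hx, huw⟩ := Submodule.mem_sup.1 hwspan
        have hxW : x ∈ W ⊓ K t := (span_le.2 hbS) hx
        have huW : u ∈ W := by
          have : u = w - x := eq_sub_of_add_eq huw
          rw [this]; exact W.sub_mem hw.1 hxW.1
        have huSW : u ∈ Submodule.span F SW := by
          rcases Nat.eq_zero_or_pos t with ht | ht
          · have : S = ∅ := hS0 ht
            rw [this] at hu; simp at hu
            rw [hu]; exact zero_mem _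
          · rw [hspSW ht]
            refine ⟨huW, ?_⟩
            have : u ∈ Submodule.span F S := hu
            rw [hspS ht] at this; exact this
        have : w = u + x := by rw [← huw]
        rw [this, span_union]
        exact Submodule.add_mem _ (Submodule.mem_sup_left huSW) (Submodule.mem_sup_right hx)
  intro t
  induction t with
  | zero =>
    obtain ⟨S, SW, hsub, _, _, _, hind, hspS, hspSW⟩ :=
      step ∅ ∅ 0 le_rfl (linearIndependent_empty F M) (fun _ => rfl)
        (fun h => absurd h (lt_irrefl 0)) (fun h => absurd h (lt_irrefl 0))
    refine ⟨S, SW, fun _ => 0, hsub, hind, hspS, hspSW, fun _ _ => le_rfl, ?_⟩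
    intro j hj
    obtain rfl := Nat.le_zero.1 hj
    have : {x ∈ S | (0:ℕ) ≤ 0} = S := by ext x; simp
    rw [this, hspS]
  | succ t ih =>
    obtain ⟨S, SW, J, hsub, hind, hspS, hspSW, hJle, hflag⟩ := ih
    obtain ⟨S', SW', hsub', hSS', _, _, hind', hspS', hspSW'⟩ :=
      step S SW (t + 1) hsub hind (fun h => absurd h (Nat.succ_ne_zero t))
        (fun _ => by simpa using hspS) (fun _ => by simpa using hspSW)
    refine ⟨S', SW', fun x => if x ∈ S then J x else t + 1, hsub', hind', hspS', hspSW', ?_, ?_⟩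
    · intro x hx
      by_cases h : x ∈ S
      · simpa [h] using (hJle x h).trans (Nat.le_succ t)
      · simp [h]
    · intro j hj
      rcases eq_or_lt_of_le hj with h | h
      case inr h =>
        have hjt : j ≤ t := Nat.lt_succ_iff.1 h
        have hset : {x ∈ S' | (if x ∈ S then J x else t + 1) ≤ j} = {x ∈ S | J x ≤ j} := by
          ext x
          constructor
          · rintro ⟨hxS', hxj⟩
            by_cases hxS : x ∈ S
            · simp only [hxS, if_true] at hxj; exact ⟨hxS, hxj⟩
            · simp only [hxS, if_false] at hxj
              omega
          · rintro ⟨hxS, hxj⟩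
            exact ⟨hSS' hxS, by simp [hxS, hxj]⟩
        rw [hset, hflag j hjt]
      case inl h =>
        subst h
        have hset : {x ∈ S' | (if x ∈ S then J x else t + 1) ≤ t + 1} = S' := by
          ext x
          simp only [Set.mem_setOf_eq, and_iff_left_iff_imp]
          intro hx
          by_cases hxS : x ∈ S
          · simpa [hxS] using (hJle x hxS).trans (Nat.le_succ t)
          · simp [hxS]
        rw [hset, hspS']

/-- If `M_i` admits an adapted basis for the flag of kernels of the maps
`φ_{i,j}` (with `ker φ_{i,n+1} = M_i`), then there exists an adapted basis of `M_i`
containing as a subset a basis of `im (φ_{i-1})`. -/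
theorem stmt3
    (F : Type*) [Field F]
    (Mprev M : Type*) [AddCommGroup Mprev] [Module F Mprev] [AddCommGroup M] [Module F M]
    [FiniteDimensional F Mprev] [FiniteDimensional F M]
    (N : ℕ → Type*) [∀ j, AddCommGroup (N j)] [∀ j, Module F (N j)]
    (n : ℕ) (ψ : ∀ j, M →ₗ[F] N j)
    (hmono : ∀ j j', j ≤ j' → LinearMap.ker (ψ j) ≤ LinearMap.ker (ψ j'))
    (htop : LinearMap.ker (ψ (n + 1)) = ⊤)
    (φprev : Mprev →ₗ[F] M)
    (m : ℕ) (v : Fin m → M) (J : Fin m → ℕ)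
    (hadapted : IsAdaptedBasis F M N n ψ m v J) :
    ∃ (v' : Fin m → M) (J' : Fin m → ℕ),
      IsAdaptedBasis F M N n ψ m v' J' ∧
      ∃ s : Set (Fin m),
        LinearIndependent F (fun k : s => v' k) ∧
        Submodule.span F (v' '' s) = LinearMap.range φprev := by
  classical
  obtain ⟨hvind, hvspan, _⟩ := hadapted
  obtain ⟨S, SW, J'', hsub, hind, hspS, hspSW, _, hflag⟩ :=
    adapted_aux F M (fun j => LinearMap.ker (ψ j)) hmono (LinearMap.range φprev) (n + 1)
  rw [htop] at hspS
  have hspSW' : Submodule.span F SW = LinearMap.range φprev := by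
    rw [hspSW, htop, inf_top_eq]
  -- `S` is a finite set of cardinality `m`
  have hfin : S.Finite := hind.setFinite
  haveI : Fintype S := hfin.fintype
  have hcardS : Fintype.card S = Module.finrank F M := by
    have bS : Module.Basis S F M := Module.Basis.mk hind (by rw [Subtype.range_coe]; exact hspS.ge)
    exact (Module.finrank_eq_card_basis bS).symm
  have hcardm : Module.finrank F M = m := by
    have bv : Module.Basis (Fin m) F M := Module.Basis.mk hvind (hvspan.ge)
    simpa using Module.finrank_eq_card_basis bv
  have e : Fin m ≃ S := (Fintype.equivFinOfCardEq (by rw [hcardS, hcardm])).symm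
  refine ⟨fun k => (e k : M), fun k => J'' (e k), ⟨?_, ?_, ?_⟩,
    {k | (e k : M) ∈ SW}, ?_, ?_⟩
  · exact hind.comp e e.injective
  · have : Set.range (fun k => (e k : M)) = S := by
      ext x
      constructor
      · rintro ⟨k, rfl⟩; exact (e k).2
      · intro hx; exact ⟨e.symm ⟨x, hx⟩, by simp⟩
    rw [this, hspS]
  · intro j hj
    have : (fun k => (e k : M)) '' {k | J'' (e k) ≤ j} = {x ∈ S | J'' x ≤ j} := by
      ext x
      constructor
      · rintro ⟨k, hk, rfl⟩; exact ⟨(e k).2, hk⟩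
      · rintro ⟨hxS, hxj⟩
        exact ⟨e.symm ⟨x, hxS⟩, by simpa using hxj, by simp⟩
    rw [this, hflag j hj]
  · exact (hind.comp e e.injective).comp _ Subtype.val_injective
  · have : (fun k => (e k : M)) '' {k | (e k : M) ∈ SW} = SW := by
      ext x
      constructor
      · rintro ⟨k, hk, rfl⟩; exact hk
      · intro hx
        exact ⟨e.symm ⟨x, hsub hx⟩, by simpa using hx, by simp⟩
    rw [this, hspSW']
end

section
/- With the setup of an adapted basis V^i of M_i containing a basis V^i_Im of im(φ_{i-1}), let V^i_Birth be the complementary subset. Then for any j > i, the images φ_{i,j}(span V^i_Birth) and φ_{i,j}(span V^i_Im) intersect trivially: φ_{i,j}(⟨V^i_Birth⟩) ∩ φ_{i,j}(⟨V^i_Im⟩) = {0}. -/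
/-- Let `v` be an adapted basis of `M_i` (for the flag of kernels of the
composite structure maps `ψ j = φ_{i,j}`) which contains, as the subset indexed by `s`,
a basis `V^i_Im` of `im (φ_{i-1})`; the complementary subset (indexed by `sᶜ`) is
`V^i_Birth`.  Then for any `j`, the images under `φ_{i,j}` of `span V^i_Birth` and of
`span V^i_Im` intersect trivially. -/
theorem stmt4
    (F : Type*) [Field F]
    (Mprev M : Type*) [AddCommGroup Mprev] [Module F Mprev] [AddCommGroup M] [Module F M]
    [FiniteDimensional F Mprev] [FiniteDimensional F M]
    (N : ℕ → Type*) [∀ j, AddCommGroup (N j)] [∀ j, Module F (N j)]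
    (n : ℕ) (ψ : ∀ j, M →ₗ[F] N j)
    (hmono : ∀ j j', j ≤ j' → LinearMap.ker (ψ j) ≤ LinearMap.ker (ψ j'))
    (htop : LinearMap.ker (ψ (n + 1)) = ⊤)
    (φprev : Mprev →ₗ[F] M)
    (m : ℕ) (v : Fin m → M) (J : Fin m → ℕ)
    (hadapted : IsAdaptedBasis F M N n ψ m v J)
    (s : Set (Fin m))
    (hIm : Submodule.span F (v '' s) = LinearMap.range φprev)
    (j : ℕ) (hj : j ≤ n + 1) :
    (Submodule.span F (v '' sᶜ)).map (ψ j) ⊓ (Submodule.span F (v '' s)).map (ψ j) = ⊥ := by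
  obtain ⟨hli, hspan, hker⟩ := hadapted
  let b : Module.Basis (Fin m) F M := Module.Basis.mk hli (by rw [hspan])
  have hvb : v = ⇑b := funext fun k => (Module.Basis.mk_apply hli _ k).symm
  rw [eq_bot_iff]
  rintro z ⟨⟨x, hx, hxz⟩, ⟨y, hy, hyz⟩⟩
  have hker' : x - y ∈ LinearMap.ker (ψ j) := by
    rw [LinearMap.mem_ker, map_sub, hxz, hyz, sub_self]
  rw [hker j hj] at hker'
  rw [hvb] at hx hy hker'
  simp only [SetLike.mem_coe, Module.Basis.mem_span_image] at hx hy hker'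
  have hx' : x ∈ Submodule.span F (⇑b '' (sᶜ ∩ {k | J k ≤ j})) := by
    rw [Module.Basis.mem_span_image]
    intro k hk
    refine ⟨hx hk, ?_⟩
    apply hker'
    rw [Finset.mem_coe, Finsupp.mem_support_iff] at hk ⊢
    have hy0 : b.repr y k = 0 := by
      by_contra h
      exact (hx (Finsupp.mem_support_iff.mpr (by simpa using hk))) (hy (Finsupp.mem_support_iff.mpr h))
    rw [map_sub, Finsupp.sub_apply, hy0, sub_zero]
    exact hk
  have hxk : x ∈ LinearMap.ker (ψ j) := by
    rw [hker j hj, hvb]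
    exact Submodule.span_mono (Set.image_mono Set.inter_subset_right) hx'
  simp only [Submodule.mem_bot]
  rw [← hxz]
  exact hxk
end

section
/- Every finite-type persistence module M = {M_i, φ_i} over a field F admits an interval basis: a finite set {v_1,…,v_N} of homogeneous elements such that M is the internal direct sum of the submodules I(v_m) generated by the v_m, and each I(v_m) is isomorphic to an interval module. -/
section Helpers
variable {F : Type*} [Field F] {V W : Type*} [AddCommGroup V] [Module F V]
  [AddCommGroup W] [Module F W] {ι : Type*} [Fintype ι]

/-- nonzero members of the family are linearly independent (coefficient form) -/
def IndepNZ (F : Type*) [Field F] {V : Type*} [AddCommGroup V] [Module F V] {ι : Type*}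
    [Fintype ι] (X : ι → V) : Prop :=
  ∀ a : ι → F, ∑ m, a m • X m = 0 → ∀ m, X m ≠ 0 → a m = 0

lemma sum_nz {N : Type*} [AddCommMonoid N] {p : ι → Prop} [DecidablePred p] (h : ι → N)
    (hz : ∀ m, ¬ p m → h m = 0) : ∑ m, h m = ∑ z : Subtype p, h z.1 := by
  rw [← Finset.sum_filter_of_ne (s := Finset.univ) (p := p) (f := h)
      (fun x _ hx => by by_contra hc; exact hx (hz x hc))]
  exact Finset.sum_subtype _ (by simp) h

lemma basis_indepNZ (B : Module.Basis ι F V) : IndepNZ F (fun m => (B m : V)) := by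
  intro a ha m _
  exact Fintype.linearIndependent_iff.mp B.linearIndependent a ha m

lemma indepNZ_map (f : V →ₗ[F] W) (hf : Function.Injective f) {X : ι → V}
    (h : IndepNZ F X) : IndepNZ F (fun m => f (X m)) := by
  intro a ha m hm
  have h1 : f (∑ m, a m • X m) = f 0 := by
    rw [map_zero, map_sum]; simpa [map_smul] using ha
  exact h a (hf h1) m (fun h' => hm (by simp [h']))

lemma indepNZ_iSupIndep {X : ι → V} (h : IndepNZ F X) :
    iSupIndep (fun m => Submodule.span F {X m}) := by
  classical
  rw [iSupIndep_def]
  intro m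
  by_cases hm : X m = 0
  · simp [hm, Submodule.span_zero_singleton]
  rw [Submodule.disjoint_def]
  intro y hy1 hy2
  obtain ⟨aval, ha⟩ := Submodule.mem_span_singleton.mp hy1
  have hle : (⨆ m', ⨆ (_ : m' ≠ m), Submodule.span F {X m'}) ≤
      Submodule.span F (Set.range fun z : {m' // m' ≠ m} => X z.1) := by
    apply iSup_le; intro m'; apply iSup_le; intro hne
    apply Submodule.span_mono
    intro t ht; rcases ht with rfl; exact ⟨⟨m', hne⟩, rfl⟩
  have hy3 := hle hy2
  rw [Submodule.mem_span_range_iff_exists_fun] at hy3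
  obtain ⟨cc, hcc⟩ := hy3
  set a : ι → F := fun m' => if h : m' = m then -aval else cc ⟨m', h⟩ with ha'
  have hsum : ∑ m', a m' • X m' = 0 := by
    rw [← Finset.add_sum_erase _ _ (Finset.mem_univ m)]
    have h1 : a m • X m = -y := by simp [ha', ← ha]
    have h2 : ∑ m' ∈ Finset.univ.erase m, a m' • X m' = y := by
      rw [Finset.sum_subtype (p := fun m' => m' ≠ m) _ (by simp) (fun m' => a m' • X m')]
      rw [← hcc]
      apply Finset.sum_congr rfl
      intro z _
      simp [ha', z.2]
    rw [h1, h2, neg_add_cancel]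
  have h3 := h a hsum m hm
  have h4 : aval = 0 := by simpa [ha'] using h3
  simp [← ha, h4]


lemma triang (κ : ι → ℕ) {Y : ι → V} (c : ι → ι → F)
    (hc : ∀ m m', c m m' ≠ 0 → κ m' < κ m ∧ Y m ≠ 0 ∧ Y m' ≠ 0)
    (h1 : IndepNZ F Y) (h2 : Submodule.span F (Set.range Y) = ⊤) :
    (∀ m, (Y m + ∑ m', c m m' • Y m') = 0 ↔ Y m = 0) ∧
    IndepNZ F (fun m => Y m + ∑ m', c m m' • Y m') ∧
    Submodule.span F (Set.range (fun m => Y m + ∑ m', c m m' • Y m')) = ⊤ := by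
  classical
  set Y' : ι → V := fun m => Y m + ∑ m', c m m' • Y m' with hY'
  have hczero : ∀ m, Y m = 0 → Y' m = 0 := by
    intro m hm
    have hcz : ∀ m', c m m' = 0 := fun m' => by
      by_contra h; exact (hc m m' h).2.1 hm
    simp [hY', hm, hcz]
  have hcc : ∀ m, c m m = 0 := by
    intro m; by_contra h; exact absurd (hc m m h).1 (lt_irrefl _)
  have hiff : ∀ m, Y' m = 0 ↔ Y m = 0 := by
    intro m
    constructor
    · intro h0
      by_contra hm
      set a : ι → F := fun m' => if m' = m then 1 else c m m' with ha
      have e1 : ∑ m', a m' • Y m' =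
          a m • Y m + ∑ m' ∈ Finset.univ.erase m, a m' • Y m' :=
        (Finset.add_sum_erase _ _ (Finset.mem_univ m)).symm
      have e2 : ∑ m', c m m' • Y m' =
          c m m • Y m + ∑ m' ∈ Finset.univ.erase m, c m m' • Y m' :=
        (Finset.add_sum_erase _ _ (Finset.mem_univ m)).symm
      have e3 : ∑ m' ∈ Finset.univ.erase m, a m' • Y m' =
          ∑ m' ∈ Finset.univ.erase m, c m m' • Y m' := by
        apply Finset.sum_congr rfl
        intro x hx
        simp [ha, Finset.ne_of_mem_erase hx]
      have hsum : ∑ m', a m' • Y m' = 0 := by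
        rw [e1, e3]
        have e4 : ∑ m' ∈ Finset.univ.erase m, c m m' • Y m' = ∑ m', c m m' • Y m' := by
          rw [e2, hcc m]; simp
        have ham : a m = 1 := by simp [ha]
        rw [e4, ham, one_smul]
        simpa [hY'] using h0
      have := h1 a hsum m hm
      simp [ha] at this
    · exact hczero m
  refine ⟨hiff, ?_, ?_⟩
  · -- independence
    intro a ha m hm
    set K := Finset.univ.sup κ with hK
    set A : ι → F := fun m' => a m' + ∑ mm, a mm * c mm m' with hA
    have hAsum : ∑ m', A m' • Y m' = 0 := by
      rw [← ha]
      simp only [hY']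
      simp only [smul_add, Finset.smul_sum, smul_smul]
      rw [Finset.sum_add_distrib, Finset.sum_comm, ← Finset.sum_add_distrib]
      apply Finset.sum_congr rfl
      intro m' _
      simp [hA, add_smul, Finset.sum_smul]
    have hA0 : ∀ m', Y m' ≠ 0 → A m' = 0 := h1 A hAsum
    have key : ∀ t : ℕ, ∀ m, K - κ m < t → Y m ≠ 0 → a m = 0 := by
      intro t
      induction t with
      | zero => omega
      | succ t ih =>
        intro m hlt hm
        have hAm : a m + ∑ mm, a mm * c mm m = 0 := by
          have := hA0 m hm; rwa [hA] at this
        have ham : a m = -∑ mm, a mm * c mm m := eq_neg_of_add_eq_zero_left hAm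
        have hz : ∀ mm, a mm * c mm m = 0 := by
          intro mm
          by_cases hcm : c mm m = 0
          · simp [hcm]
          · obtain ⟨hκ, hYmm, _⟩ := hc mm m hcm
            have hKmm : κ mm ≤ K := Finset.le_sup (Finset.mem_univ mm)
            have : a mm = 0 := ih mm (by omega) hYmm
            simp [this]
        rw [ham]
        simp [Finset.sum_congr rfl (fun mm _ => hz mm)]
    exact key (K - κ m + 1) m (Nat.lt_succ_self _) (fun h => hm (hczero m h))
  · have key2 : ∀ t : ℕ, ∀ m, κ m < t → Y m ∈ Submodule.span F (Set.range Y') := by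
      intro t; induction t with
      | zero => omega
      | succ t ih =>
        intro m hlt
        have hrw : Y m = Y' m - ∑ m', c m m' • Y m' := by simp [hY']
        rw [hrw]
        apply sub_mem (Submodule.subset_span (Set.mem_range_self m))
        apply Submodule.sum_mem
        intro m' _
        by_cases h : c m m' = 0
        · simp [h]
        · exact Submodule.smul_mem _ _ (ih m' (by have := (hc m m' h).1; omega))
    rw [eq_top_iff, ← h2, Submodule.span_le]
    rintro _ ⟨m, rfl⟩
    exact key2 (κ m + 1) m (Nat.lt_succ_self _)

lemma gauss [DecidableEq ι] (κ : ι → ℕ) (hκ : Function.Injective κ) (f : V →ₗ[F] W) (x : ι → V)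
    (s : Finset ι) :
    ∃ c : ι → ι → F,
      (∀ m m', c m m' ≠ 0 → m ∈ s ∧ m' ∈ s ∧ x m ≠ 0 ∧ x m' ≠ 0 ∧ κ m' < κ m) ∧
      IndepNZ F (fun m => if m ∈ s then f (x m + ∑ m', c m m' • x m') else 0) := by
  classical
  induction s using Finset.strongInduction with
  | _ s ih =>
  rcases s.eq_empty_or_nonempty with rfl | hne
  · exact ⟨0, by simp, by intro a ha m hm; simp at hm⟩
  obtain ⟨m₀, hm₀s, hmax⟩ := Finset.exists_max_image s κ hne
  set s' := s.erase m₀ with hs'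
  have hs'sub : s' ⊆ s := Finset.erase_subset _ _
  have hm₀s' : m₀ ∉ s' := Finset.notMem_erase _ _
  have hκs' : ∀ m ∈ s', κ m < κ m₀ := by
    intro m hm
    have h1 := hmax m (hs'sub hm)
    have h2 : m ≠ m₀ := Finset.ne_of_mem_erase hm
    exact lt_of_le_of_ne h1 (fun h => h2 (hκ h))
  obtain ⟨c', hc', hind'⟩ := ih s' (Finset.erase_ssubset hm₀s)
  set y' : ι → W := fun m => if m ∈ s' then f (x m + ∑ m', c' m m' • x m') else 0 with hy'
  have hc'm₀ : ∀ m', c' m₀ m' = 0 := by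
    intro m'; by_contra h; exact hm₀s' (hc' m₀ m' h).1
  have hy'm₀ : y' m₀ = 0 := by simp [hy', hm₀s']
  by_cases hx0 : x m₀ = 0
  · -- dead column: reuse c'
    refine ⟨c', fun m m' h => ?_, ?_⟩
    · obtain ⟨h1, h2, h3, h4, h5⟩ := hc' m m' h
      exact ⟨hs'sub h1, hs'sub h2, h3, h4, h5⟩
    · have hfe : (fun m => if m ∈ s then f (x m + ∑ m', c' m m' • x m') else 0) = y' := by
        funext m
        by_cases hm : m = m₀
        · subst hm
          simp [hy', hm₀s, hm₀s', hx0, hc'm₀]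
        · have : m ∈ s ↔ m ∈ s' := by
            simp [hs', Finset.mem_erase, hm]
          simp only [hy', this]
      rw [hfe]; exact hind'
  by_cases hw : f (x m₀) ∈ Submodule.span F (Set.range y')
  · -- eliminate column m₀
    rw [Submodule.mem_span_range_iff_exists_fun] at hw
    obtain ⟨e, he⟩ := hw
    set e'' : ι → F := fun m' => if m' ∈ s' ∧ x m' ≠ 0 then e m' else 0 with he''def
    have he'' : ∑ m', e'' m' • y' m' = f (x m₀) := by
      rw [← he]
      apply Finset.sum_congr rfl
      intro m' _
      by_cases h1 : m' ∈ s' ∧ x m' ≠ 0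
      · simp [he''def, h1]
      · suffices hz : y' m' = 0 by simp [hz]
        by_cases h2 : m' ∈ s'
        · have hx' : x m' = 0 := by
            rcases not_and_or.mp h1 with h | h
            · exact absurd h2 h
            · exact not_not.mp h
          have : ∀ m'', c' m' m'' = 0 := by
            intro m''; by_contra h3; exact (hc' m' m'' h3).2.2.1 hx'
          simp [hy', h2, hx', this]
        · simp [hy', h2]
    set c : ι → ι → F :=
      fun m m' => if m = m₀ then -(e'' m' + ∑ mm, e'' mm * c' mm m') else c' m m' with hcdef
    have hcm₀ : ∀ m', c m₀ m' = -(e'' m' + ∑ mm, e'' mm * c' mm m') := by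
      intro m'; simp [hcdef]
    have hsupp : ∀ m', e'' m' ≠ 0 → m' ∈ s' ∧ x m' ≠ 0 := by
      intro m' h
      by_contra hcon
      simp [he''def, hcon] at h
    refine ⟨c, ?_, ?_⟩
    · intro m m' h
      by_cases hm : m = m₀
      · rw [hm] at h ⊢
        rw [hcm₀] at h
        have h' : e'' m' ≠ 0 ∨ (∑ mm, e'' mm * c' mm m') ≠ 0 := by
          by_contra hcon
          push_neg at hcon
          simp [hcon.1, hcon.2] at h
        have : m' ∈ s' ∧ x m' ≠ 0 ∧ κ m' < κ m₀ := by
          rcases h' with h' | h'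
          · obtain ⟨ha1, ha2⟩ := hsupp m' h'
            exact ⟨ha1, ha2, hκs' m' ha1⟩
          · obtain ⟨mm, _, hmm⟩ := Finset.exists_ne_zero_of_sum_ne_zero h'
            have h1 : e'' mm ≠ 0 := fun hz => hmm (by simp [hz])
            have h2 : c' mm m' ≠ 0 := fun hz => hmm (by simp [hz])
            obtain ⟨hb1, hb2, hb3, hb4, hb5⟩ := hc' mm m' h2
            exact ⟨hb2, hb4, lt_trans hb5 (hκs' mm hb1)⟩
        exact ⟨hm₀s, hs'sub this.1, hx0, this.2.1, this.2.2⟩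
      · rw [hcdef] at h
        simp only [if_neg hm] at h
        obtain ⟨h1, h2, h3, h4, h5⟩ := hc' m m' h
        exact ⟨hs'sub h1, hs'sub h2, h3, h4, h5⟩
    · -- new family equals y' pointwise
      have hkey : ∑ m', c m₀ m' • x m' = -∑ m', e'' m' • (x m' + ∑ m'', c' m' m'' • x m'') := by
        simp only [hcm₀, smul_add, neg_add, add_smul, neg_smul, Finset.sum_add_distrib,
          Finset.smul_sum, Finset.sum_smul, smul_smul, Finset.sum_neg_distrib]
        congr 1
        rw [Finset.sum_comm]
      have hfe : (fun m => if m ∈ s then f (x m + ∑ m', c m m' • x m') else 0) = y' := by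
        funext m
        by_cases hm : m = m₀
        · subst hm
          rw [if_pos hm₀s, hy'm₀, hkey]
          rw [map_add, map_neg, map_sum]
          have : ∑ m', f (e'' m' • (x m' + ∑ m'', c' m' m'' • x m'')) =
              ∑ m', e'' m' • y' m' := by
            apply Finset.sum_congr rfl
            intro m' _
            by_cases hz : e'' m' = 0
            · simp [hz]
            · have hm's' : m' ∈ s' := (hsupp m' hz).1
              rw [map_smul]
              congr 1
              simp [hy', hm's']
          rw [this, he'']
          simp
        · have hms : m ∈ s ↔ m ∈ s' := by simp [hs', Finset.mem_erase, hm]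
          have : ∀ m', c m m' = c' m m' := by intro m'; simp [hcdef, hm]
          simp only [hy', hms, this]
      rw [hfe]; exact hind'
  · -- keep column m₀ : it is new, independent from the rest
    refine ⟨c', fun m m' h => ?_, ?_⟩
    · obtain ⟨h1, h2, h3, h4, h5⟩ := hc' m m' h
      exact ⟨hs'sub h1, hs'sub h2, h3, h4, h5⟩
    set y : ι → W := fun m => if m ∈ s then f (x m + ∑ m', c' m m' • x m') else 0 with hy
    have hym₀ : y m₀ = f (x m₀) := by
      simp [hy, hm₀s, hc'm₀]
    have hyy' : ∀ m, m ≠ m₀ → y m = y' m := by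
      intro m hm
      have hms : m ∈ s ↔ m ∈ s' := by simp [hs', Finset.mem_erase, hm]
      simp only [hy, hy', hms]
    intro a ha m hm
    have hsplit : a m₀ • f (x m₀) + ∑ m ∈ Finset.univ.erase m₀, a m • y' m = 0 := by
      rw [← ha, ← Finset.add_sum_erase _ _ (Finset.mem_univ m₀), hym₀]
      congr 1
      apply Finset.sum_congr rfl
      intro m' hm'
      rw [hyy' m' (Finset.ne_of_mem_erase hm')]
    have ham₀ : a m₀ = 0 := by
      by_contra h0
      apply hw
      have h1 := eq_neg_of_add_eq_zero_left hsplit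
      have h2 : f (x m₀) = (a m₀)⁻¹ • -∑ m ∈ Finset.univ.erase m₀, a m • y' m := by
        rw [← h1, smul_smul, inv_mul_cancel₀ h0, one_smul]
      rw [h2]
      apply Submodule.smul_mem
      apply neg_mem
      apply Submodule.sum_mem
      intro m' _
      exact Submodule.smul_mem _ _ (Submodule.subset_span (Set.mem_range_self m'))
    have hsum' : ∑ m, a m • y' m = 0 := by
      rw [← Finset.add_sum_erase _ _ (Finset.mem_univ m₀), hy'm₀, smul_zero, zero_add]
      rw [ham₀, zero_smul, zero_add] at hsplit
      exact hsplit
    have := hind' a hsum'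
    by_cases hmm : m = m₀
    · subst hmm; exact ham₀
    · exact this m (by rw [← hyy' m hmm]; exact hm)

end Helpers

section Main
variable {F : Type*} [Field F] {M : ℕ → Type*} [∀ i, AddCommGroup (M i)] [∀ i, Module F (M i)]

/-- step vector of the chain generated by `v m` at level `i` -/
def Xfam {ι : Type*} (φc : ∀ i j, M i →ₗ[F] M j) (b : ι → ℕ) (v : ∀ m, M (b m))
    (i : ℕ) (m : ι) : M i :=
  if b m ≤ i then φc (b m) i (v m) else 0

lemma Xfam_pos {ι : Type*} (φc : ∀ i j, M i →ₗ[F] M j) (b : ι → ℕ) (v : ∀ m, M (b m))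
    {i : ℕ} {m : ι} (h : b m ≤ i) : Xfam φc b v i m = φc (b m) i (v m) := if_pos h

lemma Xfam_neg {ι : Type*} (φc : ∀ i j, M i →ₗ[F] M j) (b : ι → ℕ) (v : ∀ m, M (b m))
    {i : ℕ} {m : ι} (h : ¬ b m ≤ i) : Xfam φc b v i m = 0 := if_neg h

variable (φ : ∀ i, M i →ₗ[F] M (i + 1)) (φc : ∀ i j, M i →ₗ[F] M j)
  (hφc0 : ∀ i, φc i i = LinearMap.id)
  (hφc : ∀ i j, i ≤ j → φc i (j + 1) = (φ j) ∘ₗ (φc i j))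

include φ hφc0 hφc in
lemma phicomp : ∀ i j k, i ≤ j → j ≤ k → ∀ u : M i, φc i k u = φc j k (φc i j u) := by
  intro i j k hij hjk
  induction k, hjk using Nat.le_induction with
  | base => intro u; rw [hφc0 j]; rfl
  | succ k hk ih =>
    intro u
    rw [hφc i k (le_trans hij hk), hφc j k hk]
    simp only [LinearMap.comp_apply]
    rw [ih u]

include φ hφc0 hφc in
lemma Xfam_shift {ι : Type*} (b : ι → ℕ) (v : ∀ m, M (b m)) {i j : ℕ} {m : ι}
    (hij : i ≤ j) (hb : b m ≤ i) :
    Xfam φc b v j m = φc i j (Xfam φc b v i m) := by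
  rw [Xfam_pos φc b v (le_trans hb hij), Xfam_pos φc b v hb]
  exact phicomp φ φc hφc0 hφc _ i j hb hij (v m)

include φ hφc0 hφc in
lemma tailbij (n₀ : ℕ) (hft : ∀ m, n₀ ≤ m → Function.Bijective (φ m)) :
    ∀ j, n₀ ≤ j → Function.Bijective (φc n₀ j) := by
  intro j hj
  induction j, hj using Nat.le_induction with
  | base => rw [hφc0 n₀]; exact Function.bijective_id
  | succ j hj ih =>
    rw [hφc n₀ j hj, LinearMap.coe_comp]
    exact Function.Bijective.comp (hft j hj) ih

include φ hφc0 hφc in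
lemma stage [∀ i, FiniteDimensional F (M i)] (n : ℕ) :
    ∃ (ι : Type) (_ : Fintype ι) (b : ι → ℕ) (v : ∀ m, M (b m)),
      (∀ m, b m ≤ n) ∧ (∀ m, v m ≠ 0) ∧
      (∀ i, i ≤ n → IndepNZ F (Xfam φc b v i)) ∧
      (∀ i, i ≤ n → Submodule.span F (Set.range (Xfam φc b v i)) = ⊤) := by
  classical
  induction n with
  | zero =>
    set B := Module.finBasis F (M 0) with hB
    refine ⟨Fin (Module.finrank F (M 0)), inferInstance, fun _ => 0, fun m => B m,
      fun _ => le_refl _, fun m => B.ne_zero m, ?_, ?_⟩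
    all_goals
      intro i hi
      interval_cases i
      have hfe : Xfam φc (fun _ => (0:ℕ)) (fun m => B m) 0 = fun m => (B m : M 0) := by
        funext m
        rw [Xfam_pos φc (fun _ => (0:ℕ)) (fun m => B m) (le_refl 0), hφc0 0]
        rfl
      rw [hfe]
    · exact basis_indepNZ B
    · exact B.span_eq
  | succ n IH =>
    obtain ⟨ι, instFT, b, v, hbn, hv0, hind, hspan⟩ := IH
    -- an injective key compatible with births
    set C := Fintype.card ι with hC
    set g : ι → ℕ := fun m => ((Fintype.equivFin ι) m : Fin C).val with hg
    have hgC : ∀ m, g m < C := fun m => ((Fintype.equivFin ι) m).2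
    have hginj : Function.Injective g := by
      intro m m' h
      apply (Fintype.equivFin ι).injective
      exact Fin.val_injective h
    set κ : ι → ℕ := fun m => b m * C + g m with hκ
    have hlt : ∀ m m', b m < b m' → κ m < κ m' := by
      intro m m' h
      calc κ m < b m * C + C := Nat.add_lt_add_left (hgC m) _
        _ = (b m + 1) * C := by ring
        _ ≤ b m' * C := Nat.mul_le_mul_right C h
        _ ≤ κ m' := Nat.le_add_right _ _
    have hble : ∀ m m', κ m' < κ m → b m' ≤ b m := by
      intro m m' h
      by_contra hcon
      exact absurd (hlt m m' (by omega)) (by omega)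
    have hκinj : Function.Injective κ := by
      intro m m' h
      have hb : b m = b m' := by
        rcases lt_trichotomy (b m) (b m') with hh | hh | hh
        · exact absurd (hlt m m' hh) (by rw [h]; omega)
        · exact hh
        · exact absurd (hlt m' m hh) (by rw [h]; omega)
      apply hginj
      have h2 : b m * C + g m = b m' * C + g m' := h
      rw [hb] at h2
      omega
    -- gaussian elimination on the columns of φ n
    obtain ⟨c, hcc, hindY⟩ := gauss κ hκinj (φ n) (Xfam φc b v n) Finset.univ
    simp only [Finset.mem_univ, if_true] at hindY
    have hcc' : ∀ m m', c m m' ≠ 0 →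
        Xfam φc b v n m ≠ 0 ∧ Xfam φc b v n m' ≠ 0 ∧ κ m' < κ m := by
      intro m m' h
      obtain ⟨_, _, h3, h4, h5⟩ := hcc m m' h
      exact ⟨h3, h4, h5⟩
    set v' : ∀ m : ι, M (b m) := fun m => v m + ∑ m', c m m' • φc (b m') (b m) (v m') with hv'
    have hbb : ∀ m m', c m m' ≠ 0 → b m' ≤ b m := fun m m' h => hble m m' (hcc' m m' h).2.2
    have hX' : ∀ i m, b m ≤ i →
        Xfam φc b v' i m = Xfam φc b v i m + ∑ m', c m m' • Xfam φc b v i m' := by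
      intro i m hbi
      rw [Xfam_pos φc b v' hbi, Xfam_pos φc b v hbi, hv']
      simp only [map_add, map_sum, map_smul]
      congr 1
      apply Finset.sum_congr rfl
      intro m' _
      by_cases hcm : c m m' = 0
      · simp [hcm]
      · have hb' : b m' ≤ b m := hbb m m' hcm
        rw [Xfam_pos φc b v (le_trans hb' hbi)]
        rw [← phicomp φ φc hφc0 hφc (b m') (b m) i hb' hbi (v m')]
    have hX'full : ∀ i m,
        Xfam φc b v' i m = Xfam φc b v i m
          + ∑ m', (if b m ≤ i then c m m' else 0) • Xfam φc b v i m' := by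
      intro i m
      by_cases hbi : b m ≤ i
      · simp only [if_pos hbi]; exact hX' i m hbi
      · rw [Xfam_neg φc b v' hbi, Xfam_neg φc b v hbi]
        simp [if_neg hbi]
    have htri : ∀ i, i ≤ n →
        (∀ m, Xfam φc b v' i m = 0 ↔ Xfam φc b v i m = 0) ∧
        IndepNZ F (Xfam φc b v' i) ∧
        Submodule.span F (Set.range (Xfam φc b v' i)) = ⊤ := by
      intro i hi
      have hcR : ∀ m m', (if b m ≤ i then c m m' else 0) ≠ 0 →
          κ m' < κ m ∧ Xfam φc b v i m ≠ 0 ∧ Xfam φc b v i m' ≠ 0 := by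
        intro m m' h
        have hbi : b m ≤ i := by by_contra hcon; simp [hcon] at h
        rw [if_pos hbi] at h
        obtain ⟨hn1, hn2, hκlt⟩ := hcc' m m' h
        have hb' : b m' ≤ b m := hble m m' hκlt
        refine ⟨hκlt, ?_, ?_⟩
        · intro h0
          apply hn1
          rw [Xfam_shift φ φc hφc0 hφc b v hi hbi, h0, map_zero]
        · intro h0
          apply hn2
          rw [Xfam_shift φ φc hφc0 hφc b v hi (le_trans hb' hbi), h0, map_zero]
      obtain ⟨t1, t2, t3⟩ := triang κ (fun m m' => if b m ≤ i then c m m' else 0) hcR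
        (hind i hi) (hspan i hi)
      have hfe : (fun m => Xfam φc b v i m
          + ∑ m', (if b m ≤ i then c m m' else 0) • Xfam φc b v i m') = Xfam φc b v' i := by
        funext m; rw [← hX'full i m]
      rw [hfe] at t2 t3
      refine ⟨fun m => ?_, t2, t3⟩
      rw [hX'full i m]
      exact t1 m
    have hv'0 : ∀ m, v' m ≠ 0 := by
      intro m h0
      have h1 : Xfam φc b v' (b m) m = 0 := by
        rw [Xfam_pos φc b v' (le_refl _), h0, map_zero]
      have h2 := ((htri (b m) (hbn m)).1 m).mp h1
      rw [Xfam_pos φc b v (le_refl _), hφc0] at h2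
      exact hv0 m h2
    have hstep : ∀ i (u : M i), φc i (i+1) u = φ i u := by
      intro i u
      rw [hφc i i (le_refl i), hφc0]
      rfl
    have hXn1 : ∀ m, Xfam φc b v' (n+1) m
        = (φ n) (Xfam φc b v n m + ∑ m', c m m' • Xfam φc b v n m') := by
      intro m
      rw [Xfam_shift φ φc hφc0 hφc b v' (Nat.le_succ n) (hbn m), hstep, hX' n m (hbn m)]
    have hindn1 : IndepNZ F (Xfam φc b v' (n+1)) := by
      have hfe : Xfam φc b v' (n+1) = fun m =>
          (φ n) (Xfam φc b v n m + ∑ m', c m m' • Xfam φc b v n m') := funext hXn1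
      rw [hfe]
      exact hindY
    -- complement at level n+1
    set S := Submodule.span F (Set.range (Xfam φc b v' (n+1))) with hS
    obtain ⟨Cc, hCompl⟩ := Submodule.exists_isCompl S
    set k := Module.finrank F Cc with hk
    set cb := Module.finBasis F Cc with hcb
    set bb : ι ⊕ Fin k → ℕ := Sum.elim b (fun _ => n+1) with hbbdef
    set vv : ∀ z : ι ⊕ Fin k, M (bb z) := fun z =>
      Sum.rec (motive := fun z => M (bb z)) (fun m => v' m) (fun j => (cb j : M (n+1))) z
      with hvv
    have hXinl : ∀ i m, Xfam φc bb vv i (Sum.inl m) = Xfam φc b v' i m := fun i m => rfl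
    have hXinrlow : ∀ i, i ≤ n → ∀ j, Xfam φc bb vv i (Sum.inr j) = 0 := by
      intro i hi j
      apply Xfam_neg
      show ¬ (n+1) ≤ i
      omega
    have hXinrtop : ∀ j, Xfam φc bb vv (n+1) (Sum.inr j) = (cb j : M (n+1)) := by
      intro j
      have h1 : bb (Sum.inr j) ≤ n+1 := le_refl _
      rw [Xfam_pos φc bb vv h1]
      show φc (n+1) (n+1) _ = _
      rw [hφc0]
      rfl
    refine ⟨ι ⊕ Fin k, inferInstance, bb, vv, ?_, ?_, ?_, ?_⟩
    · intro z
      cases z with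
      | inl m => exact le_trans (hbn m) (Nat.le_succ n)
      | inr j => exact le_refl _
    · intro z
      cases z with
      | inl m => exact hv'0 m
      | inr j =>
        intro h
        exact cb.ne_zero j (Submodule.coe_eq_zero.mp h)
    · intro i hi
      by_cases hin : i ≤ n
      · intro a ha z hz
        rw [Fintype.sum_sum_type] at ha
        have hzero : ∑ j, a (Sum.inr j) • Xfam φc bb vv i (Sum.inr j) = 0 := by
          apply Finset.sum_eq_zero
          intro j _
          rw [hXinrlow i hin j, smul_zero]
        rw [hzero, add_zero] at ha
        have ha' : ∑ m, a (Sum.inl m) • Xfam φc b v' i m = 0 := by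
          rw [← ha]
          apply Finset.sum_congr rfl
          intro m _
          rw [hXinl]
        have hres := (htri i hin).2.1 (fun m => a (Sum.inl m)) ha'
        cases z with
        | inl m =>
          apply hres m
          rw [← hXinl i m]
          exact hz
        | inr j => exact absurd (hXinrlow i hin j) hz
      · have hieq : i = n+1 := by omega
        subst hieq
        intro a ha z hz
        rw [Fintype.sum_sum_type] at ha
        have huS : ∑ m, a (Sum.inl m) • Xfam φc bb vv (n+1) (Sum.inl m) ∈ S := by
          apply Submodule.sum_mem
          intro m _
          apply Submodule.smul_mem
          rw [hXinl]
          exact Submodule.subset_span (Set.mem_range_self m)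
        have hwC : ∑ j, a (Sum.inr j) • Xfam φc bb vv (n+1) (Sum.inr j) ∈ Cc := by
          apply Submodule.sum_mem
          intro j _
          apply Submodule.smul_mem
          rw [hXinrtop j]
          exact (cb j).2
        have hu0 : ∑ m, a (Sum.inl m) • Xfam φc bb vv (n+1) (Sum.inl m) = 0 := by
          have h1 := eq_neg_of_add_eq_zero_left ha
          have h2 : ∑ m, a (Sum.inl m) • Xfam φc bb vv (n+1) (Sum.inl m) ∈ Cc :=
            h1 ▸ neg_mem hwC
          exact (Submodule.disjoint_def.mp hCompl.disjoint) _ huS h2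
        have hw0 : ∑ j, a (Sum.inr j) • Xfam φc bb vv (n+1) (Sum.inr j) = 0 := by
          rw [hu0, zero_add] at ha
          exact ha
        have hresl := hindn1 (fun m => a (Sum.inl m)) (by
          rw [← hu0]
          apply Finset.sum_congr rfl
          intro m _
          rw [hXinl])
        have hresr : ∀ j, a (Sum.inr j) = 0 := by
          have hli := cb.linearIndependent.map' Cc.subtype (Submodule.ker_subtype Cc)
          apply Fintype.linearIndependent_iff.mp hli (fun j => a (Sum.inr j))
          rw [← hw0]
          apply Finset.sum_congr rfl
          intro j _
          rw [hXinrtop j]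
          rfl
        cases z with
        | inl m =>
          apply hresl m
          rw [← hXinl (n+1) m]
          exact hz
        | inr j => exact hresr j
    · intro i hi
      by_cases hin : i ≤ n
      · rw [eq_top_iff, ← (htri i hin).2.2, Submodule.span_le]
        rintro _ ⟨m, rfl⟩
        rw [← hXinl i m]
        exact Submodule.subset_span (Set.mem_range_self _)
      · have hieq : i = n+1 := by omega
        subst hieq
        rw [eq_top_iff, ← hCompl.sup_eq_top]
        apply sup_le
        · rw [hS, Submodule.span_le]
          rintro _ ⟨m, rfl⟩
          rw [← hXinl (n+1) m]
          exact Submodule.subset_span (Set.mem_range_self _)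
        · intro x hx
          have h1 : Cc = Submodule.map Cc.subtype ⊤ := (Submodule.map_subtype_top Cc).symm
          rw [h1, ← cb.span_eq, Submodule.map_span] at hx
          have h3 : Submodule.span F (⇑Cc.subtype '' Set.range ⇑cb) ≤
              Submodule.span F (Set.range (Xfam φc bb vv (n+1))) := by
            apply Submodule.span_le.mpr
            rintro _ ⟨_, ⟨j, rfl⟩, rfl⟩
            have h2 : Cc.subtype (cb j) = Xfam φc bb vv (n+1) (Sum.inr j) := (hXinrtop j).symm
            rw [h2]
            exact Submodule.subset_span (Set.mem_range_self _)
          exact h3 hx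

include φ hφc0 hφc in
theorem stmt6aux [∀ i, FiniteDimensional F (M i)]
    (n₀ : ℕ) (hft : ∀ m, n₀ ≤ m → Function.Bijective (φ m)) :
    ∃ (N : ℕ) (b : Fin N → ℕ) (v : ∀ m : Fin N, M (b m)) (d : Fin N → ℕ∞),
      (∀ m, (b m : ℕ∞) ≤ d m) ∧
      (∀ i : ℕ, iSupIndep (fun m : Fin N =>
        if b m ≤ i then Submodule.span F {φc (b m) i (v m)} else (⊥ : Submodule F (M i)))) ∧
      (∀ i : ℕ, (⨆ m : Fin N,
        if b m ≤ i then Submodule.span F {φc (b m) i (v m)} else (⊥ : Submodule F (M i))) = ⊤) ∧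
      (∀ (m : Fin N) (i : ℕ),
        (if b m ≤ i then Submodule.span F {φc (b m) i (v m)} else (⊥ : Submodule F (M i))) ≠ ⊥
          ↔ (b m ≤ i ∧ (i : ℕ∞) ≤ d m)) := by
  classical
  obtain ⟨ι, instFT, b, v, hbn, hv0, hind, hspan⟩ := stage φ φc hφc0 hφc n₀
  have hbij : ∀ i, n₀ ≤ i → Function.Bijective (φc n₀ i) := tailbij φ φc hφc0 hφc n₀ hft
  have hXhigh : ∀ i, n₀ ≤ i → Xfam φc b v i = fun m => φc n₀ i (Xfam φc b v n₀ m) := by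
    intro i hi
    funext m
    rw [Xfam_shift φ φc hφc0 hφc b v hi (hbn m)]
  have hindAll : ∀ i, IndepNZ F (Xfam φc b v i) := by
    intro i
    by_cases hi : i ≤ n₀
    · exact hind i hi
    · have hi' : n₀ ≤ i := by omega
      rw [hXhigh i hi']
      exact indepNZ_map (φc n₀ i) (hbij i hi').injective (hind n₀ (le_refl _))
  have hspanAll : ∀ i, Submodule.span F (Set.range (Xfam φc b v i)) = ⊤ := by
    intro i
    by_cases hi : i ≤ n₀
    · exact hspan i hi
    · have hi' : n₀ ≤ i := by omega
      rw [hXhigh i hi']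
      have hrc : Set.range (fun m => φc n₀ i (Xfam φc b v n₀ m))
          = ⇑(φc n₀ i) '' Set.range (Xfam φc b v n₀) := by
        rw [← Set.range_comp]; rfl
      rw [hrc, ← Submodule.map_span, hspan n₀ (le_refl _), Submodule.map_top]
      exact LinearMap.range_eq_top.mpr (hbij i hi').surjective
  have hXb : ∀ m, Xfam φc b v (b m) m = v m := by
    intro m
    rw [Xfam_pos φc b v (le_refl _), hφc0]
    rfl
  set dd : ι → ℕ∞ := fun m => if Xfam φc b v n₀ m ≠ 0 then ⊤
    else (Nat.findGreatest (fun i => Xfam φc b v i m ≠ 0) n₀ : ℕ∞) with hdd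
  have hddiff : ∀ m i, Xfam φc b v i m ≠ 0 ↔ (b m ≤ i ∧ (i : ℕ∞) ≤ dd m) := by
    intro m i
    constructor
    · intro hne
      have hbi : b m ≤ i := by
        by_contra hcon
        exact hne (Xfam_neg φc b v hcon)
      refine ⟨hbi, ?_⟩
      by_cases ha : Xfam φc b v n₀ m ≠ 0
      · simp [hdd, ha]
      · have hin : i ≤ n₀ := by
          by_contra hcon
          apply hne
          rw [Xfam_shift φ φc hφc0 hφc b v (show n₀ ≤ i by omega) (hbn m),
            not_not.mp ha, map_zero]
        simp only [hdd, if_neg ha]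
        exact Nat.cast_le.mpr (Nat.le_findGreatest hin hne)
    · rintro ⟨hbi, hid⟩
      by_cases ha : Xfam φc b v n₀ m ≠ 0
      · by_cases hin : i ≤ n₀
        · intro h0
          apply ha
          rw [Xfam_shift φ φc hφc0 hφc b v hin hbi, h0, map_zero]
        · have hi' : n₀ ≤ i := by omega
          rw [Xfam_shift φ φc hφc0 hφc b v hi' (hbn m)]
          intro h0
          apply ha
          apply (hbij i hi').injective
          rw [h0, map_zero]
      · set D := Nat.findGreatest (fun i => Xfam φc b v i m ≠ 0) n₀ with hD
        have hdval : dd m = (D : ℕ∞) := by rw [hdd]; exact if_neg ha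
        have hidD : i ≤ D := by
          rw [hdval] at hid
          exact_mod_cast hid
        have hPD : Xfam φc b v D m ≠ 0 := by
          rw [hD]
          exact Nat.findGreatest_spec (P := fun i => Xfam φc b v i m ≠ 0) (hbn m)
            (by show Xfam φc b v (b m) m ≠ 0; rw [hXb m]; exact hv0 m)
        intro h0
        apply hPD
        rw [Xfam_shift φ φc hφc0 hφc b v hidD hbi, h0, map_zero]
  have hddge : ∀ m, (b m : ℕ∞) ≤ dd m := by
    intro m
    exact ((hddiff m (b m)).mp (by rw [hXb m]; exact hv0 m)).2
  set N := Fintype.card ι with hN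
  set e := Fintype.equivFin ι with he
  have hfam : ∀ (i : ℕ) (m : Fin N), (if b (e.symm m) ≤ i
      then Submodule.span F {φc (b (e.symm m)) i (v (e.symm m))} else ⊥)
      = Submodule.span F {Xfam φc b v i (e.symm m)} := by
    intro i m
    by_cases h : b (e.symm m) ≤ i
    · rw [if_pos h, Xfam_pos φc b v h]
    · rw [if_neg h, Xfam_neg φc b v h, Submodule.span_zero_singleton]
  refine ⟨N, fun m => b (e.symm m), fun m => v (e.symm m), fun m => dd (e.symm m),
    fun m => hddge (e.symm m), ?_, ?_, ?_⟩
  · intro i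
    have hfe : (fun m : Fin N => if b (e.symm m) ≤ i
        then Submodule.span F {φc (b (e.symm m)) i (v (e.symm m))} else ⊥)
        = (fun mm : ι => Submodule.span F {Xfam φc b v i mm}) ∘ e.symm := funext (hfam i)
    rw [hfe]
    exact (indepNZ_iSupIndep (hindAll i)).comp e.symm.injective
  · intro i
    calc (⨆ m : Fin N, if b (e.symm m) ≤ i
        then Submodule.span F {φc (b (e.symm m)) i (v (e.symm m))} else ⊥)
        = ⨆ m : Fin N, Submodule.span F {Xfam φc b v i (e.symm m)} := iSup_congr (hfam i)
      _ = ⨆ mm : ι, Submodule.span F {Xfam φc b v i mm} :=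
          Equiv.iSup_comp (g := fun mm : ι => Submodule.span F {Xfam φc b v i mm}) e.symm
      _ = Submodule.span F (Set.range (Xfam φc b v i)) := Submodule.span_range_eq_iSup.symm
      _ = ⊤ := hspanAll i
  · intro m i
    rw [hfam i m, Ne, Submodule.span_singleton_eq_bot]
    exact hddiff (e.symm m) i

end Main

/-- Every finite-type persistence module `{M i, φ i}` over a field `F` admits an
interval basis: a finite family `v 1, …, v N` of homogeneous elements (`v m ∈ M (b m)`) such
that `M` is the internal direct sum of the submodules `I(v m)` generated by the `v m`
(step-wise: the steps of the `I(v m)` are independent and span each `M i`), and each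
`I(v m)` is isomorphic to an interval module `I_{[b m, d m]}` (its step at `i` is nonzero
exactly when `b m ≤ i ≤ d m`). -/
theorem stmt6
    (F : Type*) [Field F]
    (M : ℕ → Type*) [∀ i, AddCommGroup (M i)] [∀ i, Module F (M i)]
    [∀ i, FiniteDimensional F (M i)]
    (φ : ∀ i, M i →ₗ[F] M (i + 1))
    (n₀ : ℕ) (hft : ∀ m, n₀ ≤ m → Function.Bijective (φ m))
    (φc : ∀ i j, M i →ₗ[F] M j)
    (hφc0 : ∀ i, φc i i = LinearMap.id)
    (hφc : ∀ i j, i ≤ j → φc i (j + 1) = (φ j) ∘ₗ (φc i j)) :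
    ∃ (N : ℕ) (b : Fin N → ℕ) (v : ∀ m : Fin N, M (b m)) (d : Fin N → ℕ∞),
      (∀ m, (b m : ℕ∞) ≤ d m) ∧
      (∀ i : ℕ, iSupIndep (fun m : Fin N =>
        if b m ≤ i then Submodule.span F {φc (b m) i (v m)} else (⊥ : Submodule F (M i)))) ∧
      (∀ i : ℕ, (⨆ m : Fin N,
        if b m ≤ i then Submodule.span F {φc (b m) i (v m)} else (⊥ : Submodule F (M i))) = ⊤) ∧
      (∀ (m : Fin N) (i : ℕ),
        (if b m ≤ i then Submodule.span F {φc (b m) i (v m)} else (⊥ : Submodule F (M i))) ≠ ⊥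
          ↔ (b m ≤ i ∧ (i : ℕ∞) ≤ d m)) := by
  exact stmt6aux φ φc hφc0 hφc n₀ hft
end

section
/- An interval basis of a finite persistence module induces a coherent basis: if {v_1,…,v_N} is an interval basis of {M_i, φ_i}, then for each i the set of nonzero images φ_{b_m,i}(v_m) over all m with b_m ≤ i forms a basis B_i of M_i, and these bases satisfy the coherence property (each φ_i maps basis vectors to basis vectors or to zero). -/
/-- An interval basis of a finite persistence module induces a coherent basis:
if `{v m}` is an interval basis (`M = ⊕ I(v m)`, each `I(v m)` an interval module on
`[b m, d m]`), then for each `i` the set of nonzero images `φ_{b m, i}(v m)` (over all `m`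
with `b m ≤ i`) is a basis `B i` of `M i`, and each `φ i` maps vectors of `B i` either to
vectors of `B (i+1)` or to zero. -/
theorem stmt8
    (F : Type*) [Field F]
    (M : ℕ → Type*) [∀ i, AddCommGroup (M i)] [∀ i, Module F (M i)]
    [∀ i, FiniteDimensional F (M i)]
    (φ : ∀ i, M i →ₗ[F] M (i + 1))
    (φc : ∀ i j, M i →ₗ[F] M j)
    (hφc0 : ∀ i, φc i i = LinearMap.id)
    (hφc : ∀ i j, i ≤ j → φc i (j + 1) = (φ j) ∘ₗ (φc i j))
    (N : ℕ) (b : Fin N → ℕ) (v : ∀ m : Fin N, M (b m)) (d : Fin N → ℕ∞)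
    (hbd : ∀ m, (b m : ℕ∞) ≤ d m)
    (hindep : ∀ i : ℕ, iSupIndep (fun m : Fin N =>
      if b m ≤ i then Submodule.span F {φc (b m) i (v m)} else (⊥ : Submodule F (M i))))
    (hsup : ∀ i : ℕ, (⨆ m : Fin N,
      if b m ≤ i then Submodule.span F {φc (b m) i (v m)} else (⊥ : Submodule F (M i))) = ⊤)
    (hinterval : ∀ (m : Fin N) (i : ℕ),
      (if b m ≤ i then Submodule.span F {φc (b m) i (v m)} else (⊥ : Submodule F (M i))) ≠ ⊥
        ↔ (b m ≤ i ∧ (i : ℕ∞) ≤ d m)) :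
    ∀ i : ℕ,
      (LinearIndependent F
          ((↑) : {x : M i | ∃ m : Fin N, b m ≤ i ∧ φc (b m) i (v m) = x ∧ x ≠ 0} → M i) ∧
        Submodule.span F
          {x : M i | ∃ m : Fin N, b m ≤ i ∧ φc (b m) i (v m) = x ∧ x ≠ 0} = ⊤) ∧
      (∀ x ∈ {x : M i | ∃ m : Fin N, b m ≤ i ∧ φc (b m) i (v m) = x ∧ x ≠ 0},
        φ i x ∈ {y : M (i + 1) | ∃ m : Fin N, b m ≤ i + 1 ∧ φc (b m) (i + 1) (v m) = y ∧ y ≠ 0}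
          ∨ φ i x = 0) := by
  intro i
  constructor
  · constructor
    · -- linear independence
      have hc : ∀ x : {x : M i | ∃ m : Fin N, b m ≤ i ∧ φc (b m) i (v m) = x ∧ x ≠ 0},
          ∃ m : Fin N, b m ≤ i ∧ φc (b m) i (v m) = (x : M i) := by
        rintro ⟨x, m, hm, hx, hx0⟩; exact ⟨m, hm, hx⟩
      choose c hc1 hc2 using hc
      have hinj : Function.Injective c := by
        intro x y hxy
        apply Subtype.ext
        rw [← hc2 x, ← hc2 y, hxy]
      have hind2 := (hindep i).comp hinj
      refine hind2.linearIndependent _ (fun x => ?_) (fun x => ?_)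
      · simp only [Function.comp_apply, if_pos (hc1 x), hc2 x]
        exact Submodule.mem_span_singleton_self _
      · exact x.2.choose_spec.2.2
    · -- spanning
      apply le_antisymm le_top
      rw [← hsup i]
      apply iSup_le
      intro m
      by_cases hm : b m ≤ i
      · rw [if_pos hm]
        by_cases h0 : φc (b m) i (v m) = 0
        · rw [h0]; simp
        · apply Submodule.span_mono
          intro x hx
          rw [Set.mem_singleton_iff] at hx
          subst hx
          exact ⟨m, hm, rfl, h0⟩
      · rw [if_neg hm]; exact bot_le
  · -- coherence
    rintro x ⟨m, hm, rfl, hx0⟩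
    by_cases h0 : φ i (φc (b m) i (v m)) = 0
    · right; exact h0
    · left
      exact ⟨m, hm.trans (Nat.le_succ i), by rw [hφc (b m) i hm]; rfl,
        h0⟩
end

section
/- (Hodge decomposition) For a chain complex of finite-dimensional real inner product spaces, in each degree k there is an orthogonal direct sum decomposition C_k = H_k ⊕ im(∂_{k+1}) ⊕ im(∂*_k), where H_k = ker(L_k) is the space of harmonics. Moreover, the cycle space decomposes as Z_k = ker(∂_k) = H_k ⊕ im(∂_{k+1}). -/
open RealInnerProductSpace

/-- Hodge decomposition: For a chain complex of finite-dimensional real inner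
product spaces, in degree `k` one has the orthogonal direct sum decomposition
`C_k = H_k ⊕ im ∂_{k+1} ⊕ im ∂*_k`, where `H_k = ker L_k` is the space of harmonics;
moreover the cycle space decomposes as `ker ∂_k = H_k ⊕ im ∂_{k+1}`. -/
theorem stmt12
    (C2 C1 C0 : Type*)
    [NormedAddCommGroup C2] [InnerProductSpace ℝ C2] [FiniteDimensional ℝ C2]
    [NormedAddCommGroup C1] [InnerProductSpace ℝ C1] [FiniteDimensional ℝ C1]
    [NormedAddCommGroup C0] [InnerProductSpace ℝ C0] [FiniteDimensional ℝ C0]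
    (d2 : C2 →ₗ[ℝ] C1) (d1 : C1 →ₗ[ℝ] C0)
    (hchain : d1 ∘ₗ d2 = 0)
    (L : C1 →ₗ[ℝ] C1)
    (hL : L = d2 ∘ₗ (LinearMap.adjoint d2) + (LinearMap.adjoint d1) ∘ₗ d1) :
    (∀ x ∈ LinearMap.ker L, ∀ y ∈ LinearMap.range d2, ⟪x, y⟫ = 0) ∧
    (∀ x ∈ LinearMap.ker L, ∀ y ∈ LinearMap.range (LinearMap.adjoint d1), ⟪x, y⟫ = 0) ∧
    (∀ x ∈ LinearMap.range d2, ∀ y ∈ LinearMap.range (LinearMap.adjoint d1), ⟪x, y⟫ = 0) ∧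
    (LinearMap.ker L ⊔ LinearMap.range d2 ⊔ LinearMap.range (LinearMap.adjoint d1) = ⊤) ∧
    (LinearMap.ker d1 = LinearMap.ker L ⊔ LinearMap.range d2) := by
  -- characterization of the kernel of L
  have hkerL : ∀ x : C1, L x = 0 ↔ (LinearMap.adjoint d2) x = 0 ∧ d1 x = 0 := by
    intro x
    constructor
    · intro hx
      have h0 : (0 : ℝ) = ⟪L x, x⟫ := by rw [hx]; simp
      have h1 : ⟪L x, x⟫ = ⟪(LinearMap.adjoint d2) x, (LinearMap.adjoint d2) x⟫
          + ⟪d1 x, d1 x⟫ := by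
        rw [hL]
        simp only [LinearMap.add_apply, LinearMap.comp_apply, inner_add_left]
        congr 1
        · rw [real_inner_comm]
          exact (LinearMap.adjoint_inner_left d2 ((LinearMap.adjoint d2) x) x).symm
        · exact LinearMap.adjoint_inner_left d1 x (d1 x)
      have h2 : ⟪(LinearMap.adjoint d2) x, (LinearMap.adjoint d2) x⟫
          + ⟪d1 x, d1 x⟫ = 0 := by rw [← h1, ← h0]
      have ha := real_inner_self_nonneg (x := (LinearMap.adjoint d2) x)
      have hb := real_inner_self_nonneg (x := d1 x)
      constructor
      · have : ⟪(LinearMap.adjoint d2) x, (LinearMap.adjoint d2) x⟫ = 0 := by linarith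
        exact inner_self_eq_zero.mp this
      · have : ⟪d1 x, d1 x⟫ = 0 := by linarith
        exact inner_self_eq_zero.mp this
    · rintro ⟨h1, h2⟩
      rw [hL]
      simp [h1, h2]
  have horth1 : ∀ x ∈ LinearMap.ker L, ∀ y ∈ LinearMap.range d2, ⟪x, y⟫ = 0 := by
    rintro x hx y ⟨z, rfl⟩
    have hx' := (hkerL x).mp (LinearMap.mem_ker.mp hx)
    rw [← LinearMap.adjoint_inner_left d2, hx'.1, inner_zero_left]
  have horth2 : ∀ x ∈ LinearMap.ker L, ∀ y ∈ LinearMap.range (LinearMap.adjoint d1),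
      ⟪x, y⟫ = 0 := by
    rintro x hx y ⟨z, rfl⟩
    have hx' := (hkerL x).mp (LinearMap.mem_ker.mp hx)
    rw [LinearMap.adjoint_inner_right d1, hx'.2, inner_zero_left]
  have horth3 : ∀ x ∈ LinearMap.range d2, ∀ y ∈ LinearMap.range (LinearMap.adjoint d1),
      ⟪x, y⟫ = 0 := by
    rintro x ⟨a, rfl⟩ y ⟨b, rfl⟩
    rw [LinearMap.adjoint_inner_right d1, ← LinearMap.comp_apply, hchain]
    simp
  -- L is self-adjoint
  have hsa : LinearMap.adjoint L = L := by
    rw [hL]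
    simp [LinearMap.adjoint_comp, LinearMap.adjoint_adjoint]
  -- (ker L)ᗮ ≤ range d2 ⊔ range d1*  via range L
  have htop : LinearMap.ker L ⊔ LinearMap.range d2 ⊔ LinearMap.range (LinearMap.adjoint d1)
      = ⊤ := by
    rw [eq_top_iff]
    intro x _
    -- decompose x w.r.t. ker L
    have hdecomp : x ∈ (LinearMap.ker L : Submodule ℝ C1) ⊔ (LinearMap.ker L)ᗮ := by
      rw [Submodule.sup_orthogonal_of_hasOrthogonalProjection]
      trivial
    rcases Submodule.mem_sup.mp hdecomp with ⟨h, hh, w, hw, rfl⟩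
    -- (ker L)ᗮ ≤ range L
    have hw' : w ∈ LinearMap.range L := by
      -- range L = (ker (adjoint L))ᗮ = (ker L)ᗮ; use: (range L)ᗮ = ker adjoint L = ker L
      have hr : (LinearMap.range L)ᗮ = LinearMap.ker L := by
        ext v
        constructor
        · intro hv
          rw [LinearMap.mem_ker]
          have := hv (L v) ⟨v, rfl⟩
          have h2 : ⟪L v, L v⟫ = (0 : ℝ) := by
            rw [← LinearMap.adjoint_inner_left L v (L v), hsa]
            exact hv (L (L v)) ⟨L v, rfl⟩
          exact inner_self_eq_zero.mp h2
        · intro hv u hu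
          rcases hu with ⟨z, rfl⟩
          rw [real_inner_comm, ← LinearMap.adjoint_inner_left L, hsa,
            LinearMap.mem_ker.mp hv, inner_zero_left]
      have : (LinearMap.ker L)ᗮ = LinearMap.range L := by
        rw [← hr, Submodule.orthogonal_orthogonal]
      rw [← this]
      exact hw
    rcases hw' with ⟨z, rfl⟩
    have hLz : L z = d2 ((LinearMap.adjoint d2) z) + (LinearMap.adjoint d1) (d1 z) := by
      rw [hL]; rfl
    apply Submodule.add_mem
    · exact Submodule.mem_sup_left (Submodule.mem_sup_left hh)
    · rw [hLz]
      apply Submodule.add_mem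
      · exact Submodule.mem_sup_left (Submodule.mem_sup_right ⟨_, rfl⟩)
      · exact Submodule.mem_sup_right ⟨_, rfl⟩
  refine ⟨horth1, horth2, horth3, htop, ?_⟩
  -- ker d1 = ker L ⊔ range d2
  apply le_antisymm
  · intro x hx
    have hxtop : x ∈ LinearMap.ker L ⊔ LinearMap.range d2
        ⊔ LinearMap.range (LinearMap.adjoint d1) := htop ▸ Submodule.mem_top
    rcases Submodule.mem_sup.mp hxtop with ⟨u, hu, b, hb, rfl⟩
    rcases Submodule.mem_sup.mp hu with ⟨h, hh, a, ha, rfl⟩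
    -- show b = 0
    rcases hb with ⟨y, rfl⟩
    have hd1h : d1 h = 0 := ((hkerL h).mp (LinearMap.mem_ker.mp hh)).2
    rcases ha with ⟨z, rfl⟩
    have hd1a : d1 (d2 z) = 0 := by rw [← LinearMap.comp_apply, hchain]; rfl
    have hd1x : d1 (h + d2 z + (LinearMap.adjoint d1) y) = 0 := LinearMap.mem_ker.mp hx
    have hd1b : d1 ((LinearMap.adjoint d1) y) = 0 := by
      rw [map_add, map_add, hd1h, hd1a] at hd1x
      simpa using hd1x
    have hb0 : (LinearMap.adjoint d1) y = 0 := by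
      have : ⟪(LinearMap.adjoint d1) y, (LinearMap.adjoint d1) y⟫ = (0 : ℝ) := by
        rw [LinearMap.adjoint_inner_right d1, hd1b, inner_zero_left]
      exact inner_self_eq_zero.mp this
    rw [hb0, add_zero]
    exact Submodule.add_mem _ (Submodule.mem_sup_left hh) (Submodule.mem_sup_right ⟨z, rfl⟩)
  · rw [sup_le_iff]
    constructor
    · intro x hx
      exact LinearMap.mem_ker.mpr ((hkerL x).mp (LinearMap.mem_ker.mp hx)).2
    · rintro x ⟨z, rfl⟩
      exact LinearMap.mem_ker.mpr (by rw [← LinearMap.comp_apply, hchain]; rfl)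
end

section
/- Given two sequences of chain complexes connected by chain maps, the induced persistence module of harmonic spaces {ker(L_{k,(i)}), ĥf_{k,(i)}} is isomorphic, as a persistence module over ℝ, to the k-persistent homology module {H_{k,(i)}, ~f_{k,(i)}}. -/
/-- Given a sequence of chain complexes of finite-dimensional real inner
product spaces connected by chain maps (shown in degrees `k+1, k, k-1` as `X i → Y i → W i`),
the harmonic persistence module `{ker (L i), f̂ i}` (with `f̂ i = π (i+1) ∘ f i ∘ incl` the
harmonic induced maps) is isomorphic, as a persistence module over `ℝ`, to the
`k`-persistent homology module `{H i, ~f i}` (with `~f i` the maps induced on homology):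
there are degreewise linear isomorphisms commuting with the structure maps. -/
theorem stmt16
    (X Y W : ℕ → Type)
    [∀ i, NormedAddCommGroup (X i)] [∀ i, InnerProductSpace ℝ (X i)]
    [∀ i, FiniteDimensional ℝ (X i)]
    [∀ i, NormedAddCommGroup (Y i)] [∀ i, InnerProductSpace ℝ (Y i)]
    [∀ i, FiniteDimensional ℝ (Y i)]
    [∀ i, NormedAddCommGroup (W i)] [∀ i, InnerProductSpace ℝ (W i)]
    [∀ i, FiniteDimensional ℝ (W i)]
    (d2 : ∀ i, X i →ₗ[ℝ] Y i) (d1 : ∀ i, Y i →ₗ[ℝ] W i)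
    (hchain : ∀ i, d1 i ∘ₗ d2 i = 0)
    (fX : ∀ i, X i →ₗ[ℝ] X (i + 1)) (fY : ∀ i, Y i →ₗ[ℝ] Y (i + 1))
    (fW : ∀ i, W i →ₗ[ℝ] W (i + 1))
    (hcomm2 : ∀ i, fY i ∘ₗ d2 i = d2 (i + 1) ∘ₗ fX i)
    (hcomm1 : ∀ i, fW i ∘ₗ d1 i = d1 (i + 1) ∘ₗ fY i)
    (L : ∀ i, Y i →ₗ[ℝ] Y i)
    (hL : ∀ i, L i = d2 i ∘ₗ (LinearMap.adjoint (d2 i))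
      + (LinearMap.adjoint (d1 i)) ∘ₗ d1 i)
    -- the orthogonal projections of cycles onto harmonics
    (π : ∀ i, Y i →ₗ[ℝ] Y i)
    (hπid : ∀ i, ∀ x ∈ LinearMap.ker (L i), π i x = x)
    (hπ0 : ∀ i, ∀ x ∈ LinearMap.range (d2 i), π i x = 0)
    (hπharm : ∀ i, ∀ z ∈ LinearMap.ker (d1 i), π i z ∈ LinearMap.ker (L i))
    -- the harmonic structure maps `f̂ i = π (i+1) ∘ fY i ∘ incl`
    (fhat : ∀ i, LinearMap.ker (L i) →ₗ[ℝ] LinearMap.ker (L (i + 1)))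
    (hfhat : ∀ i (h : LinearMap.ker (L i)), (fhat i h : Y (i + 1)) = π (i + 1) (fY i h))
    -- the homology structure maps `~f i`, induced on homology by the chain maps
    (ftil : ∀ i,
      (LinearMap.ker (d1 i) ⧸ (LinearMap.range (d2 i)).comap (LinearMap.ker (d1 i)).subtype)
        →ₗ[ℝ]
      (LinearMap.ker (d1 (i + 1)) ⧸
        (LinearMap.range (d2 (i + 1))).comap (LinearMap.ker (d1 (i + 1))).subtype))
    (hftil : ∀ i (z : LinearMap.ker (d1 i)) (hz : fY i (z : Y i) ∈ LinearMap.ker (d1 (i + 1))),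
      ftil i (Submodule.Quotient.mk z) = Submodule.Quotient.mk ⟨fY i (z : Y i), hz⟩) :
    ∃ e : ∀ i, LinearMap.ker (L i) ≃ₗ[ℝ]
        (LinearMap.ker (d1 i) ⧸
          (LinearMap.range (d2 i)).comap (LinearMap.ker (d1 i)).subtype),
      ∀ i (h : LinearMap.ker (L i)), e (i + 1) (fhat i h) = ftil i (e i h) := by
  classical
  -- characterization of harmonics
  have hker : ∀ i (y : Y i), y ∈ LinearMap.ker (L i) ↔
      d1 i y = 0 ∧ LinearMap.adjoint (d2 i) y = 0 := by
    intro i y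
    constructor
    · intro hy
      have h0 : d2 i (LinearMap.adjoint (d2 i) y) + LinearMap.adjoint (d1 i) (d1 i y) = 0 := by
        have := LinearMap.mem_ker.mp hy
        rw [hL i] at this
        simpa using this
      have h1 : inner ℝ (LinearMap.adjoint (d2 i) y) (LinearMap.adjoint (d2 i) y)
          + inner ℝ (d1 i y) (d1 i y) = (0 : ℝ) := by
        have := congrArg (fun v => (inner ℝ v y : ℝ)) h0
        simp only [inner_add_left, inner_zero_left] at this
        rw [← this]
        rw [← LinearMap.adjoint_inner_right (d2 i), ← LinearMap.adjoint_inner_left (d1 i)]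
      have hn1 : (0 : ℝ) ≤ inner ℝ (LinearMap.adjoint (d2 i) y) (LinearMap.adjoint (d2 i) y) :=
        real_inner_self_nonneg
      have hn2 : (0 : ℝ) ≤ inner ℝ (d1 i y) (d1 i y) := real_inner_self_nonneg
      constructor
      · have : (inner ℝ (d1 i y) (d1 i y) : ℝ) = 0 := by linarith
        exact inner_self_eq_zero.mp this
      · have : (inner ℝ (LinearMap.adjoint (d2 i) y) (LinearMap.adjoint (d2 i) y) : ℝ) = 0 := by
          linarith
        exact inner_self_eq_zero.mp this
    · rintro ⟨h1, h2⟩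
      rw [LinearMap.mem_ker, hL i]
      simp [h1, h2]
  -- Hodge decomposition of cycles
  have hodge : ∀ i (z : Y i), z ∈ LinearMap.ker (d1 i) →
      ∃ h b, z = h + b ∧ h ∈ LinearMap.ker (L i) ∧ b ∈ LinearMap.range (d2 i) := by
    intro i z hz
    have hz' : d1 i z = 0 := LinearMap.mem_ker.mp hz
    set b : Y i := (Submodule.orthogonalProjectionOnto (LinearMap.range (d2 i)) z : Y i) with hb
    have hbmem : b ∈ LinearMap.range (d2 i) := (Submodule.orthogonalProjectionOnto (LinearMap.range (d2 i)) z).2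
    have hperp : z - b ∈ (LinearMap.range (d2 i))ᗮ :=
      Submodule.sub_starProjection_mem_orthogonal z
    refine ⟨z - b, b, by abel, ?_, hbmem⟩
    rw [hker]
    constructor
    · obtain ⟨x, hx⟩ := hbmem
      have : d1 i b = 0 := by
        rw [← hx]
        have := LinearMap.congr_fun (hchain i) x
        simpa using this
      simp [map_sub, hz', this]
    · have h0 : (inner ℝ (d2 i (LinearMap.adjoint (d2 i) (z - b))) (z - b) : ℝ) = 0 := by
        exact (Submodule.mem_orthogonal _ _).mp hperp _ ⟨LinearMap.adjoint (d2 i) (z - b), rfl⟩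
      rw [← LinearMap.adjoint_inner_right (d2 i)] at h0
      exact inner_self_eq_zero.mp h0
  -- z - π z lands in boundaries, for cycles z
  have hπdiff : ∀ i (z : Y i), z ∈ LinearMap.ker (d1 i) →
      z - π i z ∈ LinearMap.range (d2 i) := by
    intro i z hz
    obtain ⟨h, b, hzhb, hh, hbb⟩ := hodge i z hz
    have : π i z = h := by
      rw [hzhb, map_add, hπid i h hh, hπ0 i b hbb, add_zero]
    rw [this, hzhb]
    simpa using hbb
  -- the degreewise maps
  have hle : ∀ i, LinearMap.ker (L i) ≤ LinearMap.ker (d1 i) := fun i y hy =>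
    LinearMap.mem_ker.mpr ((hker i y).mp hy).1
  let φ : ∀ i, LinearMap.ker (L i) →ₗ[ℝ]
      (LinearMap.ker (d1 i) ⧸
        (LinearMap.range (d2 i)).comap (LinearMap.ker (d1 i)).subtype) := fun i =>
    (Submodule.mkQ _) ∘ₗ Submodule.inclusion (hle i)
  have hφ : ∀ i, Function.Bijective (φ i) := by
    intro i
    constructor
    · intro a b hab
      have h1 : ((a : Y i) - b) ∈ LinearMap.range (d2 i) := by
        have := (Submodule.Quotient.eq _).mp hab
        simpa [Submodule.mem_comap] using this
      obtain ⟨x, hx⟩ := h1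
      have hadj : LinearMap.adjoint (d2 i) ((a : Y i) - b) = 0 := by
        have ha := ((hker i a).mp a.2).2
        have hb := ((hker i b).mp b.2).2
        simp [map_sub, ha, hb]
      have h0 : (inner ℝ ((a : Y i) - (b : Y i)) ((a : Y i) - (b : Y i)) : ℝ) = 0 := by
        calc (inner ℝ ((a : Y i) - (b : Y i)) ((a : Y i) - (b : Y i)) : ℝ)
            = inner ℝ ((a : Y i) - (b : Y i)) (d2 i x) := by rw [hx]
          _ = inner ℝ (LinearMap.adjoint (d2 i) ((a : Y i) - (b : Y i))) x :=
              (LinearMap.adjoint_inner_left (d2 i) x _).symm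
          _ = 0 := by rw [hadj]; exact inner_zero_left x
      have : (a : Y i) - (b : Y i) = 0 := inner_self_eq_zero.mp h0
      exact Subtype.ext (sub_eq_zero.mp this)
    · intro q
      obtain ⟨z, rfl⟩ := Submodule.mkQ_surjective _ q
      obtain ⟨h, b, hzhb, hh, hbb⟩ := hodge i (z : Y i) z.2
      refine ⟨⟨h, hh⟩, ?_⟩
      show (Submodule.mkQ _) (Submodule.inclusion (hle i) ⟨h, hh⟩) = (Submodule.mkQ _) z
      rw [Submodule.mkQ_apply, Submodule.mkQ_apply, Submodule.Quotient.eq, Submodule.mem_comap]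
      show ((Submodule.inclusion (hle i) ⟨h, hh⟩ - z : LinearMap.ker (d1 i)) : Y i)
          ∈ LinearMap.range (d2 i)
      have hcoe : ((Submodule.inclusion (hle i) ⟨h, hh⟩ - z : LinearMap.ker (d1 i)) : Y i)
          = h - (z : Y i) := rfl
      have hb' : h - (z : Y i) = -b := by rw [hzhb]; abel
      rw [hcoe, hb']
      exact neg_mem hbb
  let e : ∀ i, LinearMap.ker (L i) ≃ₗ[ℝ]
      (LinearMap.ker (d1 i) ⧸
        (LinearMap.range (d2 i)).comap (LinearMap.ker (d1 i)).subtype) := fun i =>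
    LinearEquiv.ofBijective (φ i) (hφ i)
  refine ⟨e, ?_⟩
  intro i h
  -- both sides
  have hcyc : fY i (h : Y i) ∈ LinearMap.ker (d1 (i + 1)) := by
    have hd1h : d1 i (h : Y i) = 0 := ((hker i h).mp h.2).1
    have hc := LinearMap.congr_fun (hcomm1 i) (h : Y i)
    simp only [LinearMap.comp_apply] at hc
    rw [LinearMap.mem_ker, ← hc, hd1h, map_zero]
  have lhs : e (i + 1) (fhat i h) =
      Submodule.Quotient.mk ⟨(fhat i h : Y (i + 1)), hle (i + 1) (fhat i h).2⟩ := rfl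
  have rhs : ftil i (e i h) = Submodule.Quotient.mk ⟨fY i (h : Y i), hcyc⟩ := by
    have : e i h = Submodule.Quotient.mk ⟨(h : Y i), hle i h.2⟩ := rfl
    rw [this, hftil i ⟨(h : Y i), hle i h.2⟩ hcyc]
  rw [lhs, rhs, Submodule.Quotient.eq]
  simp only [Submodule.mem_comap]
  show ((fhat i h : Y (i + 1)) - fY i (h : Y i)) ∈ LinearMap.range (d2 (i + 1))
  rw [hfhat i h]
  have := hπdiff (i + 1) (fY i (h : Y i)) hcyc
  have h2 : π (i + 1) (fY i (h : Y i)) - fY i (h : Y i)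
      = -((fY i (h : Y i)) - π (i + 1) (fY i (h : Y i))) := by abel
  rw [h2]
  exact neg_mem this
end
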